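/- arXiv:1105.3620 — 5 statements merged into one kernel-verified Lean document; each statement's English description precedes it below -/
import Mathlib

section
/- Let φ be an AM-chain-homotopy for a chain complex C of ℤ-modules, and let π be the associated family of maps. Then π is idempotent: for every q, π_q ∘ π_q = π_q; in particular π_q(h) = h for every h in the image of π_q. -/
/-! Write `π = 1 - (P + Q)` with `P = φ ∘ d` and `Q = d ∘ φ`. The identity `φ d φ = φ` makes
`P` and `Q` idempotent, while `d d = 0` and `φ φ = 0` give `P Q = Q P = 0`; hence `P + Q` is
idempotent, and so is its complement `π`. -/

section
variable {R M N : Type*} [Semiring R] [AddCommMonoid M] [AddCommMonoid N] [Module R M]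
  [Module R N] {f : M →ₗ[R] N} {g : N →ₗ[R] M}

lemma LinearMap.isIdempotentElem_comp_of_comp_comp_eq_self (h : f ∘ₗ g ∘ₗ f = f) :
    IsIdempotentElem (f ∘ₗ g) :=
  show (f ∘ₗ g) ∘ₗ f ∘ₗ g = f ∘ₗ g by rw [← LinearMap.comp_assoc, LinearMap.comp_assoc f, h]

lemma LinearMap.isIdempotentElem_comp_of_comp_comp_eq_self' (h : f ∘ₗ g ∘ₗ f = f) :
    IsIdempotentElem (g ∘ₗ f) :=
  show (g ∘ₗ f) ∘ₗ g ∘ₗ f = g ∘ₗ f by rw [LinearMap.comp_assoc, h]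

end

/-- Let `φ` be an AM-chain-homotopy for a chain complex `C` of `ℤ`-modules
and let `π` be the associated family of maps. Then `π` is idempotent: for every `q`,
`π_q ∘ π_q = π_q`; in particular `π_q h = h` for every `h` in the image of `π_q`. -/
theorem am_homotopy_pi_idempotent
    (C : ℕ → Type*) [∀ n, AddCommGroup (C n)] [∀ n, Module ℤ (C n)]
    (d : ∀ n, C (n + 1) →ₗ[ℤ] C n)
    (hdd : ∀ n, (d n).comp (d (n + 1)) = 0)
    (φ : ∀ n, C n →ₗ[ℤ] C (n + 1))
    (hφφ : ∀ n, (φ (n + 1)).comp (φ n) = 0)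
    (hφdφ : ∀ n, (φ n).comp ((d n).comp (φ n)) = φ n)
    (π : ∀ n, C n →ₗ[ℤ] C n)
    (hπ0 : π 0 = LinearMap.id - (d 0).comp (φ 0))
    (hπ : ∀ n, π (n + 1) =
      LinearMap.id - (φ n).comp (d n) - (d (n + 1)).comp (φ (n + 1))) :
    (∀ q, (π q).comp (π q) = π q) ∧
      ∀ q, ∀ h ∈ LinearMap.range (π q), π q h = h := by
  have hπ_idem : ∀ q, IsIdempotentElem (π q) := by
    rintro (_ | n)
    · rw [hπ0]
      exact (LinearMap.isIdempotentElem_comp_of_comp_comp_eq_self' (hφdφ 0)).one_sub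
    · have hφd_dφ : (φ n ∘ₗ d n) * (d (n + 1) ∘ₗ φ (n + 1)) = 0 := by
        rw [Module.End.mul_eq_comp, LinearMap.comp_assoc, ← LinearMap.comp_assoc (φ (n + 1)),
          hdd, LinearMap.zero_comp, LinearMap.comp_zero]
      have hdφ_φd : (d (n + 1) ∘ₗ φ (n + 1)) * (φ n ∘ₗ d n) = 0 := by
        rw [Module.End.mul_eq_comp, LinearMap.comp_assoc, ← LinearMap.comp_assoc (d n),
          hφφ, LinearMap.zero_comp, LinearMap.comp_zero]
      rw [hπ, sub_sub]
      exact IsIdempotentElem.one_sub <| IsIdempotentElem.add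
        (LinearMap.isIdempotentElem_comp_of_comp_comp_eq_self (hφdφ n))
        (LinearMap.isIdempotentElem_comp_of_comp_comp_eq_self' (hφdφ (n + 1)))
        (by rw [hφd_dφ, hdφ_φd, add_zero])
  exact ⟨hπ_idem, fun q h => (LinearMap.IsIdempotentElem.mem_range_iff (hπ_idem q)).mp⟩
end

section
/- Let φ be an AM-chain-homotopy for a chain complex C of ℤ-modules, let π be the associated family of maps, and let M be the subcomplex of C with M_q = im π_q and differential the restriction of ∂. Then the corestriction f of π to M, the inclusion g : M → C, and φ form a chain contraction of C to M: f and g are chain maps, f_q ∘ g_q = id_{M_q} for every q, and φ_{q−1}∘∂_q + ∂_{q+1}∘φ_q = id_{C_q} − g_q∘f_q for every q. -/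
/-!
Write `π = 1 - h` with `h = φ∂ + ∂φ`. Expanding `h²`, the cross terms `φ∂∂φ` and `∂φφ∂` vanish and
the squares reduce by `φ∂φ = φ`, so `h` and hence `π` are idempotent: `π` is a projection onto its
image, which gives `f ∘ g = id`. Since `∂∂ = 0`, both `∂h` and `h∂` equal `∂φ∂`, so `π` commutes
with `∂`: its image is a subcomplex and `f`, `g` are chain maps. The homotopy identity is
`1 - g ∘ f = 1 - π = h`.
-/

open LinearMap

namespace AMHomotopy

variable {R : Type*} [Semiring R] {C : ℕ → Type*} [∀ n, AddCommMonoid (C n)]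
  [∀ n, Module R (C n)] (d : ∀ n, C (n + 1) →ₗ[R] C n) (φ : ∀ n, C n →ₗ[R] C (n + 1))

/-- `h_q = 1 - π_q`. Here `d q : C (q + 1) → C q` is the paper's `∂_{q+1}`. -/
def homotopyOp : ∀ q, Module.End R (C q)
  | 0 => d 0 ∘ₗ φ 0
  | q + 1 => φ q ∘ₗ d q + d (q + 1) ∘ₗ φ (q + 1)

variable {d φ}

theorem comp_homotopyOp (hdd : ∀ n, d n ∘ₗ d (n + 1) = 0) (q : ℕ) :
    d q ∘ₗ homotopyOp d φ (q + 1) = homotopyOp d φ q ∘ₗ d q := by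
  cases q with
  | zero => simp only [homotopyOp, comp_add, ← comp_assoc, hdd, zero_comp, add_zero]
  | succ q =>
    simp only [homotopyOp, comp_add, add_comp, comp_assoc, hdd, comp_zero, zero_add]
    rw [← comp_assoc _ (d (q + 1 + 1)), hdd, zero_comp, add_zero]

theorem isIdempotentElem_homotopyOp (hφφ : ∀ n, φ (n + 1) ∘ₗ φ n = 0)
    (hφdφ : ∀ n, φ n ∘ₗ d n ∘ₗ φ n = φ n) (hdd : ∀ n, d n ∘ₗ d (n + 1) = 0) (q : ℕ) :
    IsIdempotentElem (homotopyOp d φ q) := by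
  have hφdφ' n x : φ n (d n (φ n x)) = φ n x := congr($(hφdφ n) x)
  have hφφ' n x : φ (n + 1) (φ n x) = 0 := congr($(hφφ n) x)
  have hdd' n x : d n (d (n + 1) x) = 0 := congr($(hdd n) x)
  refine LinearMap.ext fun x => ?_
  cases q with
  | zero => simp [homotopyOp, hφdφ']
  | succ q => simp [homotopyOp, hφdφ', hφφ', hdd']

end AMHomotopy

/-- Let `φ` be an AM-chain-homotopy for a chain complex `C` of `ℤ`-modules,
`π` the associated family of maps, and `M` the subcomplex with `M_q = im π_q` and
differential the restriction of `∂` (the existence of this restriction is the first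
assertion `hres`).  Then the corestriction `f` of `π` to `M`, the inclusion `g : M → C`,
and `φ` form a chain contraction of `C` to `M`: `f` and `g` are chain maps,
`f_q ∘ g_q = id` on `M_q` for every `q`, and
`φ_{q−1}∘∂_q + ∂_{q+1}∘φ_q = id − g_q∘f_q` for every `q` (the degree-0 instance reading
`∂_1∘φ_0 = id − g_0∘f_0`, since `φ_{−1} = 0`). -/
theorem am_homotopy_chain_contraction
    (C : ℕ → Type*) [∀ n, AddCommGroup (C n)] [∀ n, Module ℤ (C n)]
    (d : ∀ n, C (n + 1) →ₗ[ℤ] C n)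
    (hdd : ∀ n, (d n).comp (d (n + 1)) = 0)
    (φ : ∀ n, C n →ₗ[ℤ] C (n + 1))
    (hφφ : ∀ n, (φ (n + 1)).comp (φ n) = 0)
    (hφdφ : ∀ n, (φ n).comp ((d n).comp (φ n)) = φ n)
    (π : ∀ n, C n →ₗ[ℤ] C n)
    (hπ0 : π 0 = LinearMap.id - (d 0).comp (φ 0))
    (hπ : ∀ n, π (n + 1) =
      LinearMap.id - (φ n).comp (d n) - (d (n + 1)).comp (φ (n + 1))) :
    ∃ hres : ∀ q, ∀ x ∈ LinearMap.range (π (q + 1)), d q x ∈ LinearMap.range (π q),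
      -- f is a chain map (f := corestriction of π to M, M's differential := restriction of d)
      (∀ q, ((d q).restrict (hres q)).comp (π (q + 1)).rangeRestrict =
          ((π q).rangeRestrict).comp (d q)) ∧
      -- g is a chain map (g := inclusion of M into C)
      (∀ q, ((LinearMap.range (π q)).subtype).comp ((d q).restrict (hres q)) =
          (d q).comp (LinearMap.range (π (q + 1))).subtype) ∧
      -- f ∘ g = id on M
      (∀ q, ∀ x : LinearMap.range (π q),
          (π q).rangeRestrict ((LinearMap.range (π q)).subtype x) = x) ∧
      -- homotopy identity  φ∘∂ + ∂∘φ = id − g∘f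
      ((d 0).comp (φ 0) =
          LinearMap.id - ((LinearMap.range (π 0)).subtype).comp (π 0).rangeRestrict) ∧
      (∀ q, (φ q).comp (d q) + (d (q + 1)).comp (φ (q + 1)) =
          LinearMap.id -
            ((LinearMap.range (π (q + 1))).subtype).comp (π (q + 1)).rangeRestrict) := by
  have hπ_eq q : π q = 1 - AMHomotopy.homotopyOp d φ q := by
    cases q with
    | zero => exact hπ0
    | succ q => rw [hπ q, sub_sub]; rfl
  have d_comp_π q : d q ∘ₗ π (q + 1) = π q ∘ₗ d q := by
    simp only [hπ_eq, Module.End.one_eq_id, comp_sub, sub_comp, comp_id, id_comp,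
      AMHomotopy.comp_homotopyOp hdd]
  have hres q : ∀ x ∈ range (π (q + 1)), d q x ∈ range (π q) := by
    rintro x ⟨y, rfl⟩
    exact ⟨d q y, congr($(d_comp_π q) y).symm⟩
  have π_isProj q : IsProj (range (π q)) (π q) :=
    (hπ_eq q ▸ (AMHomotopy.isIdempotentElem_homotopyOp hφφ hφdφ hdd q).one_sub).isProj_range
  have homotopy q : LinearMap.id - (range (π q)).subtype ∘ₗ (π q).rangeRestrict =
      AMHomotopy.homotopyOp d φ q := by
    rw [← Module.End.one_eq_id, subtype_comp_codRestrict, hπ_eq, sub_sub_cancel]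
  refine ⟨hres, fun q => DFunLike.ext _ _ fun x => Subtype.ext congr($(d_comp_π q) x), fun q => rfl,
    fun q x => Subtype.ext ((π_isProj q).map_id x x.2), (homotopy 0).symm,
    fun q => (homotopy (q + 1)).symm⟩
end

section
/- Let (C,∂) be a chain complex of ℤ-modules in Smith-normal-form shape with respect to bases (b^n_i), pairings j_n and coefficients λ^n_i, and let φ be the associated discrete-vector-field homotopy. Then φ is an AM-chain-homotopy: φ_n ∘ φ_{n−1} = 0 and φ_{n−1} ∘ ∂_n ∘ φ_{n−1} = φ_{n−1} for every n. -/
/-!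
Off its unit pairs `φ` vanishes, and on a pair `(b_{j i}, b_i)` with `λ_i = 1` it sends
`b_{j i}` to `b_i`, whose boundary is `b_{j i}` again; this gives `φ ∘ ∂ ∘ φ = φ`.
For `φ ∘ φ = 0`, a basis vector `b_i` hit by `φ` has `∂ b_i = λ_i • b_{j i} ≠ 0`, so it cannot
itself be the boundary `∂ b_{i'}` of a unit pair, since then `∂ ∂ b_{i'} ≠ 0`; hence `φ b_i = 0`.
-/

open Module

theorem zsmul_basis_ne_zero {ι M : Type*} [AddCommGroup M] [Module ℤ M] (b : Basis ι ℤ M)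
    {a : ℤ} (ha : a ≠ 0) (k : ι) : a • b k ≠ 0 := by
  intro h
  -- `•` elaborates to `zsmul`, not to the action of the given `Module ℤ M` instance
  rw [← int_smul_eq_zsmul inferInstance a (b k)] at h
  exact (b.smul_eq_zero.mp h).elim ha (b.ne_zero k)

section SmithNormalForm

variable {C : ℕ → Type*} [∀ n, AddCommGroup (C n)] [∀ n, Module ℤ (C n)]
  {d : ∀ n, C (n + 1) →ₗ[ℤ] C n} {I : ℕ → Type*} {b : ∀ n, Basis (I n) ℤ (C n)}
  {Jset : ∀ m, Set (I (m + 1))} {jmap : ∀ m, Jset m → I m} {lam : ∀ m, Jset m → ℤ}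
  {φ : ∀ n, C n →ₗ[ℤ] C (n + 1)}

/-- The basis vector `b m k` is the source of a vector `(b m k, b (m + 1) i)` of the discrete
vector field, i.e. `∂ b (m + 1) i = b m k`. -/
def IsVectorSource (jmap : ∀ m, Jset m → I m) (lam : ∀ m, Jset m → ℤ) (m : ℕ) (k : I m) :
    Prop :=
  ∃ i : Jset m, lam m i = 1 ∧ jmap m i = k

theorem not_isVectorSource_of_mem {m : ℕ} (hdd : (d m).comp (d (m + 1)) = 0)
    (hd_mem : ∀ m (i : Jset m), d m (b (m + 1) i) = lam m i • b m (jmap m i))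
    (i : Jset m) (hi : lam m i ≠ 0) : ¬ IsVectorSource jmap lam (m + 1) i := by
  rintro ⟨i', hunit, hi'⟩
  have hdd_i' := LinearMap.congr_fun hdd (b (m + 2) i')
  rw [LinearMap.comp_apply, hd_mem, hunit, one_zsmul, hi', hd_mem, LinearMap.zero_apply]
    at hdd_i'
  exact zsmul_basis_ne_zero (b m) hi _ hdd_i'

theorem dvf_comp_dvf_eq_zero {m : ℕ} (hdd : (d m).comp (d (m + 1)) = 0)
    (hd_mem : ∀ m (i : Jset m), d m (b (m + 1) i) = lam m i • b m (jmap m i))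
    (hlam : ∀ i : Jset m, lam m i ≠ 0)
    (hφ_one : ∀ i : Jset m, lam m i = 1 → φ m (b m (jmap m i)) = b (m + 1) i)
    (hφ_zero : ∀ m (k : I m), ¬ IsVectorSource jmap lam m k → φ m (b m k) = 0) :
    (φ (m + 1)).comp (φ m) = 0 := by
  refine (b m).ext fun k => ?_
  rw [LinearMap.comp_apply, LinearMap.zero_apply]
  by_cases hk : IsVectorSource jmap lam m k
  · obtain ⟨i, hunit, rfl⟩ := hk
    rw [hφ_one i hunit]
    exact hφ_zero (m + 1) i (not_isVectorSource_of_mem hdd hd_mem i (hlam i))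
  · rw [hφ_zero m k hk, map_zero]

theorem dvf_comp_d_comp_dvf {m : ℕ}
    (hd_mem : ∀ i : Jset m, d m (b (m + 1) i) = lam m i • b m (jmap m i))
    (hφ_one : ∀ i : Jset m, lam m i = 1 → φ m (b m (jmap m i)) = b (m + 1) i)
    (hφ_zero : ∀ k : I m, ¬ IsVectorSource jmap lam m k → φ m (b m k) = 0) :
    (φ m).comp ((d m).comp (φ m)) = φ m := by
  refine (b m).ext fun k => ?_
  rw [LinearMap.comp_apply, LinearMap.comp_apply]
  by_cases hk : IsVectorSource jmap lam m k
  · obtain ⟨i, hunit, rfl⟩ := hk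
    rw [hφ_one i hunit, hd_mem, hunit, one_zsmul]
    exact hφ_one i hunit
  · rw [hφ_zero k hk, map_zero, map_zero]

end SmithNormalForm

theorem snf_dvf_homotopy_is_am_homotopy_general
    (C : ℕ → Type*) [∀ n, AddCommGroup (C n)] [∀ n, Module ℤ (C n)]
    (d : ∀ n, C (n + 1) →ₗ[ℤ] C n)
    (hdd : ∀ n, (d n).comp (d (n + 1)) = 0)
    -- every `C n` is free with a finite basis indexed by `I n`
    (I : ℕ → Type*) (b : ∀ n, Module.Basis (I n) ℤ (C n))
    -- Smith-normal-form shape: `Jset m ⊆ I (m+1)`, injection `jmap m` into `I m`,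
    -- positive integers `lam m`, with `∂ b i = λ_i • b (j i)` on `Jset` and `∂ b i = 0` off it
    (Jset : ∀ m, Set (I (m + 1)))
    (jmap : ∀ m, Jset m → I m)
    (lam : ∀ m, Jset m → ℤ) (hpos : ∀ m (i : Jset m), 0 < lam m i)
    (hd_mem : ∀ m (i : Jset m), d m (b (m + 1) i) = lam m i • b m (jmap m i))
    -- the associated discrete-vector-field homotopy `φ`, defined on basis elements
    (φ : ∀ n, C n →ₗ[ℤ] C (n + 1))
    (hφ_one : ∀ m (i : Jset m), lam m i = 1 → φ m (b m (jmap m i)) = b (m + 1) i)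
    (hφ_zero : ∀ m (k : I m),
      (¬ ∃ i : Jset m, lam m i = 1 ∧ jmap m i = k) → φ m (b m k) = 0) :
    (∀ m, (φ (m + 1)).comp (φ m) = 0) ∧
      (∀ m, (φ m).comp ((d m).comp (φ m)) = φ m) :=
  ⟨fun m => dvf_comp_dvf_eq_zero (hdd m) hd_mem (fun i => (hpos m i).ne') (hφ_one m) hφ_zero,
    fun m => dvf_comp_d_comp_dvf (hd_mem m) (hφ_one m) (hφ_zero m)⟩

/-- Let `(C,∂)` be a chain complex of `ℤ`-modules in Smith-normal-form shape
with respect to bases `b`, pairings `jmap` and coefficients `lam` (here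
`d m : C (m+1) → C m` is the differential `∂_{m+1}`), and let `φ` be the associated
discrete-vector-field homotopy.  Then `φ` is an AM-chain-homotopy:
`φ_{m+1} ∘ φ_m = 0` and `φ_m ∘ ∂_{m+1} ∘ φ_m = φ_m` for every `m`. -/
theorem snf_dvf_homotopy_is_am_homotopy
    (C : ℕ → Type*) [∀ n, AddCommGroup (C n)] [∀ n, Module ℤ (C n)]
    (d : ∀ n, C (n + 1) →ₗ[ℤ] C n)
    (hdd : ∀ n, (d n).comp (d (n + 1)) = 0)
    -- every `C n` is free with a finite basis indexed by `I n`
    (I : ℕ → Type*) [∀ n, Fintype (I n)] (b : ∀ n, Module.Basis (I n) ℤ (C n))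
    -- Smith-normal-form shape: `Jset m ⊆ I (m+1)`, injection `jmap m` into `I m`,
    -- positive integers `lam m`, with `∂ b i = λ_i • b (j i)` on `Jset` and `∂ b i = 0` off it
    (Jset : ∀ m, Set (I (m + 1)))
    (jmap : ∀ m, Jset m → I m) (hinj : ∀ m, Function.Injective (jmap m))
    (lam : ∀ m, Jset m → ℤ) (hpos : ∀ m (i : Jset m), 0 < lam m i)
    (hd_mem : ∀ m (i : Jset m), d m (b (m + 1) i) = lam m i • b m (jmap m i))
    (hd_not : ∀ m (i : I (m + 1)), i ∉ Jset m → d m (b (m + 1) i) = 0)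
    -- the associated discrete-vector-field homotopy `φ`, defined on basis elements
    (φ : ∀ n, C n →ₗ[ℤ] C (n + 1))
    (hφ_one : ∀ m (i : Jset m), lam m i = 1 → φ m (b m (jmap m i)) = b (m + 1) i)
    (hφ_zero : ∀ m (k : I m),
      (¬ ∃ i : Jset m, lam m i = 1 ∧ jmap m i = k) → φ m (b m k) = 0) :
    (∀ m, (φ (m + 1)).comp (φ m) = 0) ∧
      (∀ m, (φ m).comp ((d m).comp (φ m)) = φ m) :=
  snf_dvf_homotopy_is_am_homotopy_general C d hdd I b Jset jmap lam hpos hd_mem φ hφ_one hφ_zero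
end

section
/- Let (C,∂) be a chain complex of ℤ-modules in Smith-normal-form shape with respect to bases (b^n_i), pairings j_n and coefficients λ^n_i, let φ be the associated discrete-vector-field homotopy, and set π_n = id − φ_{n−1}∘∂_n − ∂_{n+1}∘φ_n. Then for every basis element b^n_i: π_n(b^n_i) = 0 if either (i ∈ J_n and λ^n_i = 1) or (i = j_{n+1}(k) for some k ∈ J_{n+1} with λ^{n+1}_k = 1), and π_n(b^n_i) = b^n_i in all other cases. Consequently im π_n is the free ℤ-module spanned by the basis elements of the latter kind. -/
/-!
Each basis element `b k` has at most one partner of coefficient `1`, and `φ ∂ + ∂ φ` acts on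
`b k` as the identity if it has one and as `0` otherwise: `φ ∂ (b k) = b k` exactly when `k`
pairs downwards with coefficient `1`, and `∂ φ (b k) = b k` exactly when `k` is hit from above
with coefficient `1`. Both cannot happen, since `∂∘∂ = 0` kills the second kind of element
while the first has `∂ (b k) = b (j k) ≠ 0`. So `π` is the coordinate projection onto the
unpaired basis elements.
-/

/-- `killed I Jset jmap lam m k` says that the basis element `b m k` disappears in
`im π`: either (for `m = p + 1`) `k` lies in `J` of its own level with coefficient `1`
(i.e. `∂_{p+1}(b k) = b (jmap k)`), or `k = jmap i` for some `i` in the level above with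
coefficient `1` (i.e. `b k = ∂(b i)`). -/
def killed (I : ℕ → Type*) (Jset : ∀ m, Set (I (m + 1)))
    (jmap : ∀ m, Jset m → I m) (lam : ∀ m, Jset m → ℤ) : ∀ m, I m → Prop
  | 0, k => ∃ i : Jset 0, lam 0 i = 1 ∧ jmap 0 i = k
  | (p + 1), k => (∃ h : k ∈ Jset p, lam p ⟨k, h⟩ = 1) ∨
      ∃ i : Jset (p + 1), lam (p + 1) i = 1 ∧ jmap (p + 1) i = k

theorem LinearMap.range_eq_span_image_of_basis {R M N ι : Type*} [Semiring R]
    [AddCommMonoid M] [Module R M] [AddCommMonoid N] [Module R N]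
    (b : Module.Basis ι R M) (f : M →ₗ[R] N) (v : ι → N) (s : Set ι)
    (hs : ∀ k ∈ s, f (b k) = v k) (hsc : ∀ k ∉ s, f (b k) = 0) :
    LinearMap.range f = Submodule.span R (v '' s) := by
  rw [LinearMap.range_eq_map, ← b.span_eq, Submodule.map_span, ← Set.range_comp]
  apply le_antisymm
  · refine Submodule.span_le.2 ?_
    rintro _ ⟨k, rfl⟩
    by_cases hk : k ∈ s
    · exact Submodule.subset_span ⟨k, hk, (hs k hk).symm⟩
    · simp only [Function.comp_apply, hsc k hk, SetLike.mem_coe, Submodule.zero_mem]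
  · refine Submodule.span_mono ?_
    rintro _ ⟨k, hk, rfl⟩
    exact ⟨k, hs k hk⟩

theorem sub_ite_self {M : Type*} [AddGroup M] (P : Prop) [Decidable P] (x : M) :
    x - (if P then x else 0) = if P then 0 else x := by
  split_ifs <;> simp

theorem sub_ite_self_sub_ite_self {M : Type*} [AddGroup M] {P Q : Prop} [Decidable P]
    [Decidable Q] (hPQ : P → ¬ Q) (x : M) :
    x - (if P then x else 0) - (if Q then x else 0) = if P ∨ Q then 0 else x := by
  by_cases hP : P
  · simp [hP, hPQ hP]
  · simp only [hP, if_false, sub_zero, false_or, sub_ite_self]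

namespace SmithNormalForm

variable {R : Type*} [Ring R] {I : ℕ → Type*} {Jset : ∀ m, Set (I (m + 1))}

def IsUnitHit (jmap : ∀ m, Jset m → I m) (lam : ∀ m, Jset m → R) (m : ℕ) (k : I m) : Prop :=
  ∃ i : Jset m, lam m i = 1 ∧ jmap m i = k

def IsUnitPair (lam : ∀ m, Jset m → R) (p : ℕ) (k : I (p + 1)) : Prop :=
  ∃ h : k ∈ Jset p, lam p ⟨k, h⟩ = 1

variable {C : ℕ → Type*} [∀ n, AddCommGroup (C n)] [∀ n, Module R (C n)]
  {d : ∀ n, C (n + 1) →ₗ[R] C n} {b : ∀ n, Module.Basis (I n) R (C n)}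
  {jmap : ∀ m, Jset m → I m} {lam : ∀ m, Jset m → R} {φ : ∀ n, C n →ₗ[R] C (n + 1)}

theorem d_basis_eq_of_lam_eq_one
    (hd_mem : ∀ m (i : Jset m), d m (b (m + 1) i) = lam m i • b m (jmap m i))
    {m : ℕ} {i : Jset m} (hl : lam m i = 1) :
    d m (b (m + 1) i) = b m (jmap m i) := by
  rw [hd_mem, hl, one_smul]

theorem not_isUnitHit_of_isUnitPair [Nontrivial R]
    (hdd : ∀ n, (d n).comp (d (n + 1)) = 0)
    (hd_mem : ∀ m (i : Jset m), d m (b (m + 1) i) = lam m i • b m (jmap m i))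
    {p : ℕ} {k : I (p + 1)} (hk : IsUnitPair lam p k) : ¬ IsUnitHit jmap lam (p + 1) k := by
  obtain ⟨h, hl⟩ := hk
  rintro ⟨i, hli, rfl⟩
  have hdd_i : d p (d (p + 1) (b (p + 2) i)) = 0 := LinearMap.congr_fun (hdd p) _
  rw [d_basis_eq_of_lam_eq_one hd_mem hli, d_basis_eq_of_lam_eq_one hd_mem hl] at hdd_i
  exact (b p).ne_zero _ hdd_i

open Classical in
theorem phi_d_basis_eq_ite (hinj : ∀ m, Function.Injective (jmap m))
    (hd_mem : ∀ m (i : Jset m), d m (b (m + 1) i) = lam m i • b m (jmap m i))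
    (hd_not : ∀ m (i : I (m + 1)), i ∉ Jset m → d m (b (m + 1) i) = 0)
    (hφ_one : ∀ m (i : Jset m), lam m i = 1 → φ m (b m (jmap m i)) = b (m + 1) i)
    (hφ_zero : ∀ m (k : I m), ¬ IsUnitHit jmap lam m k → φ m (b m k) = 0)
    (p : ℕ) (k : I (p + 1)) :
    φ p (d p (b (p + 1) k)) = if IsUnitPair lam p k then b (p + 1) k else 0 := by
  split_ifs with hk
  · obtain ⟨h, hl⟩ := hk
    rw [d_basis_eq_of_lam_eq_one hd_mem hl, hφ_one p _ hl]
  · by_cases h : k ∈ Jset p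
    · -- `jmap` is injective, so the only candidate partner of `j k` is `k` itself
      have hj : ¬ IsUnitHit jmap lam p (jmap p ⟨k, h⟩) := by
        rintro ⟨i, hl, hi⟩
        exact hk ⟨h, hinj p hi ▸ hl⟩
      rw [hd_mem p ⟨k, h⟩, map_smul, hφ_zero p _ hj, smul_zero]
    · rw [hd_not p k h, map_zero]

open Classical in
theorem d_phi_basis_eq_ite
    (hd_mem : ∀ m (i : Jset m), d m (b (m + 1) i) = lam m i • b m (jmap m i))
    (hφ_one : ∀ m (i : Jset m), lam m i = 1 → φ m (b m (jmap m i)) = b (m + 1) i)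
    (hφ_zero : ∀ m (k : I m), ¬ IsUnitHit jmap lam m k → φ m (b m k) = 0)
    (m : ℕ) (k : I m) :
    d m (φ m (b m k)) = if IsUnitHit jmap lam m k then b m k else 0 := by
  split_ifs with hk
  · obtain ⟨i, hl, rfl⟩ := hk
    rw [hφ_one m i hl, d_basis_eq_of_lam_eq_one hd_mem hl]
  · rw [hφ_zero m k hk, map_zero]

theorem killed_zero_iff {jmap : ∀ m, Jset m → I m} {lam : ∀ m, Jset m → ℤ} {k : I 0} :
    killed I Jset jmap lam 0 k ↔ IsUnitHit jmap lam 0 k :=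
  Iff.rfl

theorem killed_succ_iff {jmap : ∀ m, Jset m → I m} {lam : ∀ m, Jset m → ℤ} {p : ℕ}
    {k : I (p + 1)} :
    killed I Jset jmap lam (p + 1) k ↔ IsUnitPair lam p k ∨ IsUnitHit jmap lam (p + 1) k :=
  Iff.rfl

end SmithNormalForm

open SmithNormalForm in
theorem snf_pi_on_basis_general
    (C : ℕ → Type*) [∀ n, AddCommGroup (C n)] [∀ n, Module ℤ (C n)]
    (d : ∀ n, C (n + 1) →ₗ[ℤ] C n)
    (hdd : ∀ n, (d n).comp (d (n + 1)) = 0)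
    -- every `C n` is free with a finite basis indexed by `I n`
    (I : ℕ → Type*) (b : ∀ n, Module.Basis (I n) ℤ (C n))
    -- Smith-normal-form shape: `Jset m ⊆ I (m+1)`, injection `jmap m` into `I m`,
    -- positive integers `lam m`, with `∂ b i = λ_i • b (j i)` on `Jset` and `∂ b i = 0` off it
    (Jset : ∀ m, Set (I (m + 1)))
    (jmap : ∀ m, Jset m → I m) (hinj : ∀ m, Function.Injective (jmap m))
    (lam : ∀ m, Jset m → ℤ)
    (hd_mem : ∀ m (i : Jset m), d m (b (m + 1) i) = lam m i • b m (jmap m i))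
    (hd_not : ∀ m (i : I (m + 1)), i ∉ Jset m → d m (b (m + 1) i) = 0)
    -- the associated discrete-vector-field homotopy `φ`, defined on basis elements
    (φ : ∀ n, C n →ₗ[ℤ] C (n + 1))
    (hφ_one : ∀ m (i : Jset m), lam m i = 1 → φ m (b m (jmap m i)) = b (m + 1) i)
    (hφ_zero : ∀ m (k : I m),
      (¬ ∃ i : Jset m, lam m i = 1 ∧ jmap m i = k) → φ m (b m k) = 0)
    (π : ∀ n, C n →ₗ[ℤ] C n)
    (hπ0 : π 0 = LinearMap.id - (d 0).comp (φ 0))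
    (hπ : ∀ n, π (n + 1) =
      LinearMap.id - (φ n).comp (d n) - (d (n + 1)).comp (φ (n + 1))) :
    (∀ m (k : I m),
      (killed I Jset jmap lam m k → π m (b m k) = 0) ∧
      (¬ killed I Jset jmap lam m k → π m (b m k) = b m k)) ∧
    (∀ m, LinearMap.range (π m) =
      Submodule.span ℤ ((b m) '' {k | ¬ killed I Jset jmap lam m k})) := by
  classical
  -- `hd_mem` is stated with the `zsmul` of the additive group, the lemmas with the `ℤ`-module action
  have hd_mem' : ∀ m (i : Jset m), d m (b (m + 1) i) = _ :=
    fun m i => (hd_mem m i).trans (int_smul_eq_zsmul inferInstance _ _).symm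
  have π_basis : ∀ m (k : I m), π m (b m k) = if killed I Jset jmap lam m k then 0 else b m k := by
    rintro (_ | p) k
    · rw [hπ0, LinearMap.sub_apply, LinearMap.comp_apply, LinearMap.id_apply,
        d_phi_basis_eq_ite hd_mem' hφ_one hφ_zero, sub_ite_self]
      simp only [killed_zero_iff]
    · rw [hπ, LinearMap.sub_apply, LinearMap.sub_apply, LinearMap.comp_apply, LinearMap.comp_apply,
        LinearMap.id_apply, phi_d_basis_eq_ite hinj hd_mem' hd_not hφ_one hφ_zero,
        d_phi_basis_eq_ite hd_mem' hφ_one hφ_zero,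
        sub_ite_self_sub_ite_self (not_isUnitHit_of_isUnitPair hdd hd_mem')]
      simp only [killed_succ_iff]
  refine ⟨fun m k => ⟨fun hk => by rw [π_basis, if_pos hk], fun hk => by rw [π_basis, if_neg hk]⟩,
    fun m => ?_⟩
  exact LinearMap.range_eq_span_image_of_basis (b m) (π m) (b m) _
    (fun k hk => by rw [π_basis, if_neg hk]) (fun k hk => by rw [π_basis, if_pos (not_not.1 hk)])

/-- Let `(C,∂)` be a chain complex of `ℤ`-modules in Smith-normal-form shape
with respect to bases `b`, pairings `jmap` and coefficients `lam`, let `φ` be the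
associated discrete-vector-field homotopy and `π = id − φ∘∂ − ∂∘φ`.  Then for every basis
element `b m k`: `π (b m k) = 0` if `k` is `killed` (i.e. either `k` pairs downwards with
coefficient `1` or `k` is hit from above with coefficient `1`), and `π (b m k) = b m k`
in all other cases.  Consequently `im π_m` is the (free) `ℤ`-submodule spanned by the
non-killed basis elements. -/
theorem snf_pi_on_basis
    (C : ℕ → Type*) [∀ n, AddCommGroup (C n)] [∀ n, Module ℤ (C n)]
    (d : ∀ n, C (n + 1) →ₗ[ℤ] C n)
    (hdd : ∀ n, (d n).comp (d (n + 1)) = 0)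
    -- every `C n` is free with a finite basis indexed by `I n`
    (I : ℕ → Type*) [∀ n, Fintype (I n)] (b : ∀ n, Module.Basis (I n) ℤ (C n))
    -- Smith-normal-form shape: `Jset m ⊆ I (m+1)`, injection `jmap m` into `I m`,
    -- positive integers `lam m`, with `∂ b i = λ_i • b (j i)` on `Jset` and `∂ b i = 0` off it
    (Jset : ∀ m, Set (I (m + 1)))
    (jmap : ∀ m, Jset m → I m) (hinj : ∀ m, Function.Injective (jmap m))
    (lam : ∀ m, Jset m → ℤ) (hpos : ∀ m (i : Jset m), 0 < lam m i)
    (hd_mem : ∀ m (i : Jset m), d m (b (m + 1) i) = lam m i • b m (jmap m i))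
    (hd_not : ∀ m (i : I (m + 1)), i ∉ Jset m → d m (b (m + 1) i) = 0)
    -- the associated discrete-vector-field homotopy `φ`, defined on basis elements
    (φ : ∀ n, C n →ₗ[ℤ] C (n + 1))
    (hφ_one : ∀ m (i : Jset m), lam m i = 1 → φ m (b m (jmap m i)) = b (m + 1) i)
    (hφ_zero : ∀ m (k : I m),
      (¬ ∃ i : Jset m, lam m i = 1 ∧ jmap m i = k) → φ m (b m k) = 0)
    (π : ∀ n, C n →ₗ[ℤ] C n)
    (hπ0 : π 0 = LinearMap.id - (d 0).comp (φ 0))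
    (hπ : ∀ n, π (n + 1) =
      LinearMap.id - (φ n).comp (d n) - (d (n + 1)).comp (φ (n + 1))) :
    (∀ m (k : I m),
      (killed I Jset jmap lam m k → π m (b m k) = 0) ∧
      (¬ killed I Jset jmap lam m k → π m (b m k) = b m k)) ∧
    (∀ m, LinearMap.range (π m) =
      Submodule.span ℤ ((b m) '' {k | ¬ killed I Jset jmap lam m k})) :=
  snf_pi_on_basis_general C d hdd I b Jset jmap hinj lam hd_mem hd_not φ hφ_one hφ_zero π hπ0 hπ
end

section
/- Let (C,∂) be a chain complex of free ℤ-modules and q ≥ 1 with finite bases x_1,…,x_m of C_q, y_1,…,y_s of C_{q−1}, and z_1,…,z_p of C_{q+1}. Suppose ∂_q(x_i) = λ_i y_i with λ_i ≥ 2 for i ≤ ℓ and ∂_q(x_i) = 0 for ℓ < i ≤ m; and ∂_{q+1}(z_k) = μ_k x_{σ(k)} with μ_k ≥ 2 for k ≤ r, where σ : {1,…,r} → {ℓ+1,…,m} is injective, and ∂_{q+1}(z_k) = 0 for r < k ≤ p. Then the q-th cohomology of the cochain complex Hom_ℤ(C,ℤ) is isomorphic to (⨁_{i=1}^{ℓ}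 ℤ/λ_iℤ) ⊕ ℤ^{m−ℓ−r}, and the classes of the dual basis elements x*_1,…,x*_ℓ generate the torsion summands, the class of x*_i having order λ_i. -/
attribute [local instance 2000] Submodule.module

/-- The `q`-cocycles of the cochain complex `Hom_ℤ(D, ℤ)` of a chain complex `D` with
differentials `dD n : D (n+1) → D n`: the kernel of the codifferential
`δ^q = (dD q).dualMap`, `δ^q(c) = c ∘ ∂_{q+1}`. -/
def cocyc (D : ℕ → Type*) [∀ n, AddCommGroup (D n)] [∀ n, Module ℤ (D n)]
    (dD : ∀ n, D (n + 1) →ₗ[ℤ] D n) (q : ℕ) : Submodule ℤ (Module.Dual ℤ (D q)) :=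
  LinearMap.ker (dD q).dualMap

open Module Function

/-!
Order the basis of `C_q` as `x_1, …, x_ℓ` (torsion), `x_{σ(1)}, …, x_{σ(r)}` (hit by `∂_{q+1}`)
and the remaining `m - ℓ - r` free elements. In these coordinates a cochain `c` is a cocycle iff
`c(x_{σ(k)}) = 0` for all `k` (as `μ_k ≠ 0` and `ℤ` is torsion free), and a coboundary
`c = g ∘ ∂_q` iff `λ_i ∣ c(x_i)` for `i ≤ ℓ` and `c` vanishes on all other basis elements.
Hence `c ↦ ((c(x_i) mod λ_i)_{i ≤ ℓ}, (c(x_j))_{j free})` maps the cocycles onto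
`⨁ ℤ/λ_i ⊕ ℤ^{m-ℓ-r}` with kernel the coboundaries.
-/

theorem exists_sumEquiv_inl_eq {α ι : Type*} [Fintype α] [Fintype ι] {g : α → ι}
    (hg : Injective g) {k : ℕ} (hk : Fintype.card α + k = Fintype.card ι) :
    ∃ e : α ⊕ Fin k ≃ ι, ∀ a, e (Sum.inl a) = g a := by
  classical
  have hcard : Fintype.card ↥(Set.range g)ᶜ = k := by
    rw [Fintype.card_compl_set, Set.card_range_of_injective hg]
    omega
  exact ⟨(Equiv.sumCongr (Equiv.ofInjective g hg) (Fintype.equivFinOfCardEq hcard).symm).trans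
    (Equiv.Set.sumCompl _), fun _ => rfl⟩

theorem Fin.exists_sumEquiv_castLE {ℓ r m : ℕ} (hlm : ℓ ≤ m) {σ : Fin r → Fin m}
    (hσ : Injective σ) (hσℓ : ∀ k, ℓ ≤ (σ k : ℕ)) :
    ∃ e : Fin ℓ ⊕ (Fin r ⊕ Fin (m - ℓ - r)) ≃ Fin m,
      (∀ i, e (Sum.inl i) = Fin.castLE hlm i) ∧ (∀ k, e (Sum.inr (Sum.inl k)) = σ k) ∧
        ∀ g, ℓ ≤ (e (Sum.inr g) : ℕ) := by
  have hg : Injective (Sum.elim (Fin.castLE hlm) σ) :=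
    (Fin.castLE_injective hlm).sumElim hσ fun i k h =>
      (hσℓ k).not_gt (by rw [← h]; exact i.isLt)
  have hle := Fintype.card_le_of_injective _ hg
  simp only [Fintype.card_sum, Fintype.card_fin] at hle
  obtain ⟨e, he⟩ := exists_sumEquiv_inl_eq hg (k := m - ℓ - r) (by simp; omega)
  set e' := (Equiv.sumAssoc _ _ _).symm.trans e
  have htor : ∀ i, e' (Sum.inl i) = Fin.castLE hlm i := fun i => he (Sum.inl i)
  refine ⟨e', htor, fun k => he (Sum.inr k), fun g => ?_⟩
  by_contra! hlt
  have : e' (Sum.inl ⟨_, hlt⟩) = e' (Sum.inr g) := by rw [htor]; rfl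
  exact Sum.inl_ne_inr (e'.injective this)

section DualMap

variable {R M N : Type*} [CommRing R] [AddCommGroup M] [Module R M] [AddCommGroup N] [Module R N]

theorem LinearMap.mem_ker_dualMap_iff_of_basis [NoZeroDivisors R] {p r : ℕ} (f : N →ₗ[R] M)
    (z : Basis (Fin p) R N) (hrp : r ≤ p) {mu : Fin r → R} (hmu : ∀ k, mu k ≠ 0)
    {w : Fin r → M} (hfz : ∀ k, f (z (Fin.castLE hrp k)) = mu k • w k)
    (hfz' : ∀ k : Fin p, r ≤ (k : ℕ) → f (z k) = 0) (c : Dual R M) :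
    c ∈ LinearMap.ker f.dualMap ↔ ∀ k, c (w k) = 0 := by
  have hc : ∀ k, c (f (z (Fin.castLE hrp k))) = 0 ↔ c (w k) = 0 := fun k => by
    rw [hfz, map_smul, smul_eq_mul, mul_eq_zero, or_iff_right (hmu k)]
  rw [LinearMap.mem_ker]
  refine ⟨fun h k => (hc k).1 (LinearMap.congr_fun h _), fun h => z.ext fun k => ?_⟩
  rw [LinearMap.dualMap_apply, LinearMap.zero_apply]
  by_cases hk : (k : ℕ) < r
  · exact (hc ⟨k, hk⟩).2 (h _)
  · rw [hfz' k (not_lt.1 hk), map_zero]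

theorem LinearMap.mem_range_dualMap_iff_of_basis {A G Y : Type*} (d : M →ₗ[R] N)
    (b : Basis (A ⊕ G) R M) (y : Basis Y R N) {ι : A → Y} (hι : Injective ι) (lam : A → R)
    (hb : ∀ i, d (b (Sum.inl i)) = lam i • y (ι i)) (hb' : ∀ g, d (b (Sum.inr g)) = 0)
    (c : Dual R M) :
    c ∈ LinearMap.range d.dualMap ↔
      (∀ i, lam i ∣ c (b (Sum.inl i))) ∧ ∀ g, c (b (Sum.inr g)) = 0 := by
  constructor
  · rintro ⟨γ, rfl⟩
    exact ⟨fun i => ⟨γ (y (ι i)), by simp [hb]⟩, fun g => by simp [hb']⟩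
  · rintro ⟨hdvd, hzero⟩
    choose w hw using hdvd
    refine ⟨y.constr R (extend ι w 0), b.ext fun a => ?_⟩
    rcases a with i | g
    · simp [hb, hι.extend_apply, hw]
    · simp [hb', hzero]

end DualMap

section Coordinates

-- `A`: torsion indices, `B`: indices hit by the next differential, `F`: free indices.

variable {M A B F : Type*} [AddCommGroup M] [Module ℤ M] (b : Basis (A ⊕ (B ⊕ F)) ℤ M)
  (N : A → ℕ)

noncomputable def torsionFreeCoords :
    Dual ℤ M →ₗ[ℤ] ((i : A) → ZMod (N i)) × (F → ℤ) where
  toFun c := (fun i => (c (b (Sum.inl i)) : ZMod (N i)), fun j => c (b (Sum.inr (Sum.inr j))))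
  map_add' c c' := by ext <;> simp
  map_smul' n c := by ext <;> simp

theorem torsionFreeCoords_coord_inl [DecidableEq A] (i : A) :
    torsionFreeCoords b N (b.coord (Sum.inl i)) = (Pi.single i 1, 0) := by
  ext j
  · by_cases h : j = i
    · subst h; simp [torsionFreeCoords]
    · simp [torsionFreeCoords, h]
  · simp [torsionFreeCoords]

variable {b N} {P Q : Submodule ℤ (Dual ℤ M)}

theorem exists_mem_torsionFreeCoords_eq
    (hP : ∀ c, c ∈ P ↔ ∀ k, c (b (Sum.inr (Sum.inl k))) = 0)
    (t : ((i : A) → ZMod (N i)) × (F → ℤ)) :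
    ∃ c ∈ P, torsionFreeCoords b N c = t := by
  obtain ⟨a, v⟩ := t
  choose a' ha' using fun i => ZMod.intCast_surjective (a i)
  refine ⟨b.constr ℤ (Sum.elim a' (Sum.elim 0 v)), (hP _).2 fun k => by simp, ?_⟩
  ext <;> simp [torsionFreeCoords, ha']

theorem torsionFreeCoords_eq_zero_iff
    (hP : ∀ c, c ∈ P ↔ ∀ k, c (b (Sum.inr (Sum.inl k))) = 0)
    (hQ : ∀ c, c ∈ Q ↔ (∀ i, (N i : ℤ) ∣ c (b (Sum.inl i))) ∧ ∀ g, c (b (Sum.inr g)) = 0)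
    {c : Dual ℤ M} (hc : c ∈ P) :
    torsionFreeCoords b N c = 0 ↔ c ∈ Q := by
  simp only [torsionFreeCoords, LinearMap.coe_mk, AddHom.coe_mk, Prod.mk_eq_zero, funext_iff,
    Pi.zero_apply, ZMod.intCast_zmod_eq_zero_iff_dvd, hQ, Sum.forall]
  exact ⟨fun ⟨htor, hfree⟩ => ⟨htor, (hP c).1 hc, hfree⟩, fun ⟨htor, _, hfree⟩ => ⟨htor, hfree⟩⟩

theorem exists_quotient_linearEquiv_torsionFreeCoords
    (hP : ∀ c, c ∈ P ↔ ∀ k, c (b (Sum.inr (Sum.inl k))) = 0)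
    (hQ : ∀ c, c ∈ Q ↔ (∀ i, (N i : ℤ) ∣ c (b (Sum.inl i))) ∧ ∀ g, c (b (Sum.inr g)) = 0) :
    ∃ e : (P ⧸ Q.comap P.subtype) ≃ₗ[ℤ] ((i : A) → ZMod (N i)) × (F → ℤ),
      ∀ c : P, e (Submodule.Quotient.mk c) = torsionFreeCoords b N c := by
  have hsurj : Surjective (torsionFreeCoords b N ∘ₗ P.subtype) := fun t => by
    obtain ⟨c, hc, rfl⟩ := exists_mem_torsionFreeCoords_eq hP t
    exact ⟨⟨c, hc⟩, rfl⟩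
  have hker : Q.comap P.subtype = LinearMap.ker (torsionFreeCoords b N ∘ₗ P.subtype) := by
    ext ⟨c, hc⟩
    exact (torsionFreeCoords_eq_zero_iff hP hQ hc).symm
  exact ⟨(Submodule.quotEquivOfEq _ _ hker).trans (LinearMap.quotKerEquivOfSurjective _ hsurj),
    fun _ => rfl⟩

end Coordinates

theorem addOrderOf_single_one_zero {A F : Type*} [DecidableEq A] (N : A → ℕ) (i : A) :
    addOrderOf ((Pi.single i 1, 0) : ((i : A) → ZMod (N i)) × (F → ℤ)) = N i := by
  rw [Prod.addOrderOf_mk, addOrderOf_zero, Nat.lcm_one_right]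
  exact (addOrderOf_injective (AddMonoidHom.single (fun i => ZMod (N i)) i)
    (Pi.single_injective (M := fun i => ZMod (N i)) i) 1).trans
    (ZMod.addOrderOf_one (N i))

theorem cohomology_of_snf_data_general
    (C : ℕ → Type*) [∀ n, AddCommGroup (C n)] [∀ n, Module ℤ (C n)]
    (d : ∀ n, C (n + 1) →ₗ[ℤ] C n)
    (n : ℕ) (m s p ℓ r : ℕ) (hlm : ℓ ≤ m) (hls : ℓ ≤ s) (hrp : r ≤ p)
    (x : Module.Basis (Fin m) ℤ (C (n + 1)))
    (y : Module.Basis (Fin s) ℤ (C n))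
    (z : Module.Basis (Fin p) ℤ (C (n + 2)))
    (lam : Fin ℓ → ℤ) (hlam : ∀ i, 2 ≤ lam i)
    (mu : Fin r → ℤ) (hmu : ∀ k, 2 ≤ mu k)
    (σ : Fin r → Fin m) (hσinj : Function.Injective σ)
    (hσrange : ∀ k, ℓ ≤ (σ k : ℕ))
    (hd1 : ∀ i : Fin ℓ, d n (x (Fin.castLE hlm i)) = lam i • y (Fin.castLE hls i))
    (hd2 : ∀ i : Fin m, ℓ ≤ (i : ℕ) → d n (x i) = 0)
    (hd3 : ∀ k : Fin r, d (n + 1) (z (Fin.castLE hrp k)) = mu k • x (σ k))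
    (hd4 : ∀ k : Fin p, r ≤ (k : ℕ) → d (n + 1) (z k) = 0) :
    ∃ e : (↥(cocyc C d (n + 1)) ⧸
        (LinearMap.range (d n).dualMap).comap (cocyc C d (n + 1)).subtype) ≃ₗ[ℤ]
        ((i : Fin ℓ) → ZMod (lam i).toNat) × (Fin (m - ℓ - r) → ℤ),
      ∀ i : Fin ℓ, ∀ hmem : x.coord (Fin.castLE hlm i) ∈ cocyc C d (n + 1),
        e (Submodule.Quotient.mk ⟨x.coord (Fin.castLE hlm i), hmem⟩) =
          (Pi.single i 1, 0) ∧
        addOrderOf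
          (Submodule.Quotient.mk ⟨x.coord (Fin.castLE hlm i), hmem⟩ :
            ↥(cocyc C d (n + 1)) ⧸
              (LinearMap.range (d n).dualMap).comap (cocyc C d (n + 1)).subtype) =
          (lam i).toNat := by
  obtain ⟨ε, hεtor, hεbd, hεrest⟩ := Fin.exists_sumEquiv_castLE hlm hσinj hσrange
  set b := x.reindex ε.symm
  have hb : ∀ a, b a = x (ε a) := by simp [b]
  -- `hd1` and `hd3` are stated with the `zsmul` of `AddCommGroup`, not the scalar action of
  -- the given `Module ℤ` instance; `int_smul_eq_zsmul` converts between the two.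
  have hP : ∀ c, c ∈ cocyc C d (n + 1) ↔ ∀ k, c (b (Sum.inr (Sum.inl k))) = 0 := by
    simpa only [cocyc, hb, hεbd] using (d (n + 1)).mem_ker_dualMap_iff_of_basis z hrp
      (fun k => by have := hmu k; omega)
      (fun k => (hd3 k).trans (int_smul_eq_zsmul _ _ _).symm) hd4
  have hQ : ∀ c, c ∈ LinearMap.range (d n).dualMap ↔
      (∀ i, ((lam i).toNat : ℤ) ∣ c (b (Sum.inl i))) ∧ ∀ g, c (b (Sum.inr g)) = 0 := by
    simpa only [fun i => Int.toNat_of_nonneg (by linarith [hlam i] : 0 ≤ lam i)] using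
      (d n).mem_range_dualMap_iff_of_basis b y (Fin.castLE_injective hls) lam
        (fun i => by rw [hb, hεtor, hd1]; exact (int_smul_eq_zsmul _ _ _).symm)
        (fun g => by rw [hb]; exact hd2 _ (hεrest g))
  obtain ⟨e, he⟩ := exists_quotient_linearEquiv_torsionFreeCoords hP hQ
  refine ⟨e, fun i hmem => ?_⟩
  have hcoord : x.coord (Fin.castLE hlm i) = b.coord (Sum.inl i) := by
    ext v; simp [b, Module.Basis.coord_apply, hεtor]
  have hei : e (Submodule.Quotient.mk ⟨_, hmem⟩) = (Pi.single i 1, 0) := by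
    rw [he]; simp only [hcoord]; exact torsionFreeCoords_coord_inl b _ i
  refine ⟨hei, ?_⟩
  rw [← e.toAddEquiv.addOrderOf_eq]
  exact (congrArg addOrderOf hei).trans (addOrderOf_single_one_zero _ i)

/-- Let `(C,∂)` be a chain complex of free `ℤ`-modules and `q ≥ 1` (we
write `q = n + 1`, so `∂_q = d n` and `∂_{q+1} = d (n+1)`), with finite bases
`x_1, …, x_m` of `C_q`, `y_1, …, y_s` of `C_{q−1}` and `z_1, …, z_p` of `C_{q+1}`.
Suppose `∂_q(x_i) = λ_i y_i` with `λ_i ≥ 2` for `i ≤ ℓ` and `∂_q(x_i) = 0` for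
`ℓ < i ≤ m`; and `∂_{q+1}(z_k) = μ_k x_{σ(k)}` with `μ_k ≥ 2` for `k ≤ r`, where
`σ : {1,…,r} → {ℓ+1,…,m}` is injective, and `∂_{q+1}(z_k) = 0` for `r < k ≤ p`.
Then the `q`-th cohomology `ker δ^q / im δ^{q−1}` of `Hom_ℤ(C, ℤ)` is isomorphic to
`(⨁_{i=1}^{ℓ} ℤ/λ_iℤ) ⊕ ℤ^{m−ℓ−r}`, the class of the dual basis element `x*_i`
(`i ≤ ℓ`) mapping to the standard generator of the `i`-th torsion summand and having
order `λ_i`. -/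
theorem cohomology_of_snf_data
    (C : ℕ → Type*) [∀ n, AddCommGroup (C n)] [∀ n, Module ℤ (C n)]
    (d : ∀ n, C (n + 1) →ₗ[ℤ] C n)
    (hdd : ∀ n, (d n).comp (d (n + 1)) = 0)
    (n : ℕ) (m s p ℓ r : ℕ) (hlm : ℓ ≤ m) (hls : ℓ ≤ s) (hrp : r ≤ p)
    (x : Module.Basis (Fin m) ℤ (C (n + 1)))
    (y : Module.Basis (Fin s) ℤ (C n))
    (z : Module.Basis (Fin p) ℤ (C (n + 2)))
    (lam : Fin ℓ → ℤ) (hlam : ∀ i, 2 ≤ lam i)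
    (mu : Fin r → ℤ) (hmu : ∀ k, 2 ≤ mu k)
    (σ : Fin r → Fin m) (hσinj : Function.Injective σ)
    (hσrange : ∀ k, ℓ ≤ (σ k : ℕ))
    (hd1 : ∀ i : Fin ℓ, d n (x (Fin.castLE hlm i)) = lam i • y (Fin.castLE hls i))
    (hd2 : ∀ i : Fin m, ℓ ≤ (i : ℕ) → d n (x i) = 0)
    (hd3 : ∀ k : Fin r, d (n + 1) (z (Fin.castLE hrp k)) = mu k • x (σ k))
    (hd4 : ∀ k : Fin p, r ≤ (k : ℕ) → d (n + 1) (z k) = 0) :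
    ∃ e : (↥(cocyc C d (n + 1)) ⧸
        (LinearMap.range (d n).dualMap).comap (cocyc C d (n + 1)).subtype) ≃ₗ[ℤ]
        ((i : Fin ℓ) → ZMod (lam i).toNat) × (Fin (m - ℓ - r) → ℤ),
      ∀ i : Fin ℓ, ∀ hmem : x.coord (Fin.castLE hlm i) ∈ cocyc C d (n + 1),
        e (Submodule.Quotient.mk ⟨x.coord (Fin.castLE hlm i), hmem⟩) =
          (Pi.single i 1, 0) ∧
        addOrderOf
          (Submodule.Quotient.mk ⟨x.coord (Fin.castLE hlm i), hmem⟩ :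
            ↥(cocyc C d (n + 1)) ⧸
              (LinearMap.range (d n).dualMap).comap (cocyc C d (n + 1)).subtype) =
          (lam i).toNat :=
  cohomology_of_snf_data_general C d n m s p ℓ r hlm hls hrp x y z lam hlam mu hmu σ hσinj hσrange
    hd1 hd2 hd3 hd4
end
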